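/- Fix Λ > 0, unimodular γ_→, γ_← ∈ ℂ, and α₁, α₂, α₃, α₄ ∈ ℂ with α₁ + α₂·e^{iπ/4} ≠ 0, α₁ + α₂·e^{−iπ/4} ≠ 0, α₃ + α₄·e^{iπ/4} ≠ 0, and α₃ + α₄·e^{−iπ/4} ≠ 0. Then the following are equivalent: (i) for all c_L, c_R ∈ ℂ, the function ψ := c_L·f + c_R·g (with boundary values ψ(∓Λ), ψ′(∓Λ) given by the corresponding linear combinations of the boundary values of f and g) satisfies ψ(Λ) = α₁·ψ(−Λ) + α₂·ψ′(−Λ) and ψ′(Λ) = α₃·ψ(−Λ) + α₄·ψ′(−Λ); (ii) γ_→ = (α₁ + α₂·e^{−iπ/4})·e^{i√2Λ} = (α₃ + α₄·e^{−iπ/4})·e^{3iπ/4}·e^{i√2Λ} and γ_← = (α₁ + α₂·e^{iπ/4})⁻¹·e^{i√2Λ} = (α₃ + α₄·e^{iπ/4})⁻¹·e^{3iπ/4}·e^{i√2Λ}. -/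

import Mathlib

open ComplexConjugate Real

/-- The normalization factor `N = 2^{1/4} e^{Λ/√2}` of the paper. -/
noncomputable def Nc (Λ : ℝ) : ℂ :=
  (((2 : ℝ) ^ ((1 : ℝ) / 4) * Real.exp (Λ / Real.sqrt 2) : ℝ) : ℂ)

/-- `L₊(x) = N e^{(1-i)x/√2}` for `x < -Λ`, and `0` beyond the junction. -/
noncomputable def Lp (Λ : ℝ) (x : ℝ) : ℂ :=
  if x < -Λ then Nc Λ * Complex.exp ((1 - Complex.I) * x / Real.sqrt 2) else 0

/-- `L₋(x) = N e^{(1+i)x/√2}` for `x < -Λ`, and `0` beyond the junction. -/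
noncomputable def Lm (Λ : ℝ) (x : ℝ) : ℂ :=
  if x < -Λ then Nc Λ * Complex.exp ((1 + Complex.I) * x / Real.sqrt 2) else 0

/-- `R₊(x) = N e^{(-1+i)x/√2}` for `x > Λ`, and `0` beyond the junction. -/
noncomputable def Rp (Λ : ℝ) (x : ℝ) : ℂ :=
  if Λ < x then Nc Λ * Complex.exp ((-1 + Complex.I) * x / Real.sqrt 2) else 0

/-- `R₋(x) = N e^{(-1-i)x/√2}` for `x > Λ`, and `0` beyond the junction. -/
noncomputable def Rm (Λ : ℝ) (x : ℝ) : ℂ :=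
  if Λ < x then Nc Λ * Complex.exp ((-1 - Complex.I) * x / Real.sqrt 2) else 0

/-- One-sided boundary value `L₊(-Λ) = N e^{-(1-i)Λ/√2}`. -/
noncomputable def LpB (Λ : ℝ) : ℂ := Nc Λ * Complex.exp (-((1 - Complex.I) * Λ) / Real.sqrt 2)

/-- One-sided boundary value `L₋(-Λ) = N e^{-(1+i)Λ/√2}`. -/
noncomputable def LmB (Λ : ℝ) : ℂ := Nc Λ * Complex.exp (-((1 + Complex.I) * Λ) / Real.sqrt 2)

/-- One-sided boundary value `R₊(Λ) = N e^{(-1+i)Λ/√2}`. -/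
noncomputable def RpB (Λ : ℝ) : ℂ := Nc Λ * Complex.exp ((-1 + Complex.I) * Λ / Real.sqrt 2)

/-- One-sided boundary value `R₋(Λ) = N e^{(-1-i)Λ/√2}`. -/
noncomputable def RmB (Λ : ℝ) : ℂ := Nc Λ * Complex.exp ((-1 - Complex.I) * Λ / Real.sqrt 2)

/-!
The boundary condition is linear in `ψ`, so it holds for every `c_L f + c_R g` exactly when it
holds for `f` and for `g`. At the two junctions the exponentials are tied by
`L₊(-Λ) = R₋(Λ) e^{i√2Λ}` and `R₊(Λ) = L₋(-Λ) e^{i√2Λ}`, so after cancelling the nonzero common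
factor `R₋(Λ)`, resp. `L₋(-Λ)`, each of the four scalar conditions becomes one of the formulas
for `γ_→` and `γ_←`.
-/

/-- `BC(α₁,α₂,α₃,α₄)` on the boundary data `ψm = ψ(-Λ)`, `ψm' = ψ'(-Λ)`, `ψp = ψ(Λ)`,
`ψp' = ψ'(Λ)`. -/
def SatisfiesBC {R : Type*} [Mul R] [Add R] (α₁ α₂ α₃ α₄ ψm ψm' ψp ψp' : R) : Prop :=
  ψp = α₁ * ψm + α₂ * ψm' ∧ ψp' = α₃ * ψm + α₄ * ψm'

theorem forall_satisfiesBC_linear_combination_iff {R : Type*} [CommRing R]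
    {α₁ α₂ α₃ α₄ fm fm' fp fp' gm gm' gp gp' : R} :
    (∀ cL cR : R, SatisfiesBC α₁ α₂ α₃ α₄ (cL * fm + cR * gm) (cL * fm' + cR * gm')
        (cL * fp + cR * gp) (cL * fp' + cR * gp')) ↔
      SatisfiesBC α₁ α₂ α₃ α₄ fm fm' fp fp' ∧ SatisfiesBC α₁ α₂ α₃ α₄ gm gm' gp gp' := by
  constructor
  · intro h
    have hf := h 1 0
    have hg := h 0 1
    simp only [SatisfiesBC, one_mul, zero_mul, add_zero, zero_add] at hf hg
    exact ⟨hf, hg⟩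
  · rintro ⟨⟨hf, hf'⟩, ⟨hg, hg'⟩⟩ cL cR
    exact ⟨by linear_combination cL * hf + cR * hg, by linear_combination cL * hf' + cR * hg'⟩

section Field

variable {K : Type*} [Field K] {α₁ α₂ α₃ α₄ p q r γ E : K}

theorem satisfiesBC_transmitted_right_iff {B : K} (hB : B ≠ 0) (hqr : q * r = 1) :
    SatisfiesBC α₁ α₂ α₃ α₄ (B * E) (p * (B * E)) (γ * B) (q * (γ * B)) ↔
      γ = (α₁ + α₂ * p) * E ∧ (α₁ + α₂ * p) * E = (α₃ + α₄ * p) * r * E := by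
  have h₁ : γ * B = α₁ * (B * E) + α₂ * (p * (B * E)) ↔ γ = (α₁ + α₂ * p) * E := by
    constructor <;> intro h
    · exact mul_right_cancel₀ hB (by linear_combination h)
    · linear_combination B * h
  have h₂ : q * (γ * B) = α₃ * (B * E) + α₄ * (p * (B * E)) ↔ γ = (α₃ + α₄ * p) * r * E := by
    constructor <;> intro h
    · exact mul_right_cancel₀ hB (by linear_combination r * h - γ * B * hqr)
    · linear_combination q * B * h + (α₃ + α₄ * p) * E * B * hqr
  rw [SatisfiesBC, h₁, h₂]
  exact and_congr_right fun h => by rw [h]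

theorem satisfiesBC_transmitted_left_iff {B : K} (hB : B ≠ 0) (h₁₂ : α₁ + α₂ * p ≠ 0)
    (h₃₄ : α₃ + α₄ * p ≠ 0) :
    SatisfiesBC α₁ α₂ α₃ α₄ (γ * B) (p * (γ * B)) (B * E) (r * (B * E)) ↔
      γ = (α₁ + α₂ * p)⁻¹ * E ∧ (α₁ + α₂ * p)⁻¹ * E = (α₃ + α₄ * p)⁻¹ * r * E := by
  have h₁ : B * E = α₁ * (γ * B) + α₂ * (p * (γ * B)) ↔ γ = (α₁ + α₂ * p)⁻¹ * E := by
    rw [inv_mul_eq_div, eq_div_iff h₁₂]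
    constructor <;> intro h
    · exact mul_right_cancel₀ hB (by linear_combination -h)
    · linear_combination -B * h
  have h₂ : r * (B * E) = α₃ * (γ * B) + α₄ * (p * (γ * B)) ↔ γ = (α₃ + α₄ * p)⁻¹ * r * E := by
    rw [mul_assoc, inv_mul_eq_div, eq_div_iff h₃₄]
    constructor <;> intro h
    · exact mul_right_cancel₀ hB (by linear_combination -h)
    · linear_combination -B * h
  rw [SatisfiesBC, h₁, h₂]
  exact and_congr_right fun h => by rw [h]

end Field

theorem Nc_ne_zero (Λ : ℝ) : Nc Λ ≠ 0 := by
  unfold Nc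
  exact_mod_cast (by positivity : (0 : ℝ) < 2 ^ ((1 : ℝ) / 4) * Real.exp (Λ / Real.sqrt 2)).ne'

theorem RmB_ne_zero (Λ : ℝ) : RmB Λ ≠ 0 := mul_ne_zero (Nc_ne_zero Λ) (Complex.exp_ne_zero _)

theorem LmB_ne_zero (Λ : ℝ) : LmB Λ ≠ 0 := mul_ne_zero (Nc_ne_zero Λ) (Complex.exp_ne_zero _)

theorem exp_sub_I_div_sqrt_two_mul_exp (z : ℂ) (Λ : ℝ) :
    Complex.exp ((z - Complex.I) * Λ / Real.sqrt 2) * Complex.exp (Complex.I * (Real.sqrt 2 * Λ)) =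
      Complex.exp ((z + Complex.I) * Λ / Real.sqrt 2) := by
  rw [← Complex.exp_add]
  congr 1
  have hsq : (Real.sqrt 2 : ℂ) * Real.sqrt 2 = 2 := by
    rw [← Complex.ofReal_mul, Real.mul_self_sqrt zero_le_two, Complex.ofReal_ofNat]
  have hne : (Real.sqrt 2 : ℂ) ≠ 0 := by simp
  field_simp
  linear_combination Complex.I * Λ * hsq

theorem LpB_eq_RmB_mul (Λ : ℝ) :
    LpB Λ = RmB Λ * Complex.exp (Complex.I * (Real.sqrt 2 * Λ)) := by
  rw [LpB, RmB, mul_assoc, exp_sub_I_div_sqrt_two_mul_exp]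
  ring_nf

theorem RpB_eq_LmB_mul (Λ : ℝ) :
    RpB Λ = LmB Λ * Complex.exp (Complex.I * (Real.sqrt 2 * Λ)) := by
  rw [RpB, LmB, mul_assoc, ← exp_sub_I_div_sqrt_two_mul_exp]
  ring_nf

theorem stmt12_general (Λ : ℝ) (γr γl : ℂ)
    (α₁ α₂ α₃ α₄ : ℂ)
    (h12p : α₁ + α₂ * Complex.exp (Complex.I * (π / 4)) ≠ 0)
    (h34p : α₃ + α₄ * Complex.exp (Complex.I * (π / 4)) ≠ 0)
    (fBm fBm' fBp fBp' gBm gBm' gBp gBp' : ℂ)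
    (hfBm : fBm = LpB Λ)
    (hfBm' : fBm' = Complex.exp (-(Complex.I * (π / 4))) * LpB Λ)
    (hfBp : fBp = γr * RmB Λ)
    (hfBp' : fBp' = Complex.exp (-(Complex.I * (3 * π / 4))) * (γr * RmB Λ))
    (hgBm : gBm = γl * LmB Λ)
    (hgBm' : gBm' = Complex.exp (Complex.I * (π / 4)) * (γl * LmB Λ))
    (hgBp : gBp = RpB Λ)
    (hgBp' : gBp' = Complex.exp (Complex.I * (3 * π / 4)) * RpB Λ) :
    (∀ cL cR : ℂ,
      cL * fBp + cR * gBp =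
        α₁ * (cL * fBm + cR * gBm) + α₂ * (cL * fBm' + cR * gBm') ∧
      cL * fBp' + cR * gBp' =
        α₃ * (cL * fBm + cR * gBm) + α₄ * (cL * fBm' + cR * gBm')) ↔
    (γr = (α₁ + α₂ * Complex.exp (-(Complex.I * (π / 4)))) *
        Complex.exp (Complex.I * (Real.sqrt 2 * Λ)) ∧
     (α₁ + α₂ * Complex.exp (-(Complex.I * (π / 4)))) *
        Complex.exp (Complex.I * (Real.sqrt 2 * Λ)) =
       (α₃ + α₄ * Complex.exp (-(Complex.I * (π / 4)))) *
        Complex.exp (Complex.I * (3 * π / 4)) *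
        Complex.exp (Complex.I * (Real.sqrt 2 * Λ)) ∧
     γl = (α₁ + α₂ * Complex.exp (Complex.I * (π / 4)))⁻¹ *
        Complex.exp (Complex.I * (Real.sqrt 2 * Λ)) ∧
     (α₁ + α₂ * Complex.exp (Complex.I * (π / 4)))⁻¹ *
        Complex.exp (Complex.I * (Real.sqrt 2 * Λ)) =
       (α₃ + α₄ * Complex.exp (Complex.I * (π / 4)))⁻¹ *
        Complex.exp (Complex.I * (3 * π / 4)) *
        Complex.exp (Complex.I * (Real.sqrt 2 * Λ))) := by
  subst hfBm hfBm' hfBp hfBp' hgBm hgBm' hgBp hgBp'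
  have hphase :
      Complex.exp (-(Complex.I * (3 * π / 4))) * Complex.exp (Complex.I * (3 * π / 4)) = 1 := by
    rw [Complex.exp_neg, inv_mul_cancel₀ (Complex.exp_ne_zero _)]
  rw [LpB_eq_RmB_mul, RpB_eq_LmB_mul]
  refine forall_satisfiesBC_linear_combination_iff.trans ?_
  rw [satisfiesBC_transmitted_right_iff (RmB_ne_zero Λ) hphase,
    satisfiesBC_transmitted_left_iff (LmB_ne_zero Λ) h12p h34p, and_assoc]

/-- Lemma 7 of the paper: the tunneling boundary condition `BC(α₁,α₂,α₃,α₄)`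
holds for all `ψ = c_L f + c_R g` iff the unitary parameters `γ_→, γ_←`
are given by the stated formulas. -/
theorem stmt12 (Λ : ℝ) (hΛ : 0 < Λ) (γr γl : ℂ)
    (hγr : ‖γr‖ = 1) (hγl : ‖γl‖ = 1)
    (α₁ α₂ α₃ α₄ : ℂ)
    (h12p : α₁ + α₂ * Complex.exp (Complex.I * (π / 4)) ≠ 0)
    (h12m : α₁ + α₂ * Complex.exp (-(Complex.I * (π / 4))) ≠ 0)
    (h34p : α₃ + α₄ * Complex.exp (Complex.I * (π / 4)) ≠ 0)
    (h34m : α₃ + α₄ * Complex.exp (-(Complex.I * (π / 4))) ≠ 0)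
    (fBm fBm' fBp fBp' gBm gBm' gBp gBp' : ℂ)
    (hfBm : fBm = LpB Λ)
    (hfBm' : fBm' = Complex.exp (-(Complex.I * (π / 4))) * LpB Λ)
    (hfBp : fBp = γr * RmB Λ)
    (hfBp' : fBp' = Complex.exp (-(Complex.I * (3 * π / 4))) * (γr * RmB Λ))
    (hgBm : gBm = γl * LmB Λ)
    (hgBm' : gBm' = Complex.exp (Complex.I * (π / 4)) * (γl * LmB Λ))
    (hgBp : gBp = RpB Λ)
    (hgBp' : gBp' = Complex.exp (Complex.I * (3 * π / 4)) * RpB Λ) :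
    (∀ cL cR : ℂ,
      cL * fBp + cR * gBp =
        α₁ * (cL * fBm + cR * gBm) + α₂ * (cL * fBm' + cR * gBm') ∧
      cL * fBp' + cR * gBp' =
        α₃ * (cL * fBm + cR * gBm) + α₄ * (cL * fBm' + cR * gBm')) ↔
    (γr = (α₁ + α₂ * Complex.exp (-(Complex.I * (π / 4)))) *
        Complex.exp (Complex.I * (Real.sqrt 2 * Λ)) ∧
     (α₁ + α₂ * Complex.exp (-(Complex.I * (π / 4)))) *
        Complex.exp (Complex.I * (Real.sqrt 2 * Λ)) =
       (α₃ + α₄ * Complex.exp (-(Complex.I * (π / 4)))) *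
        Complex.exp (Complex.I * (3 * π / 4)) *
        Complex.exp (Complex.I * (Real.sqrt 2 * Λ)) ∧
     γl = (α₁ + α₂ * Complex.exp (Complex.I * (π / 4)))⁻¹ *
        Complex.exp (Complex.I * (Real.sqrt 2 * Λ)) ∧
     (α₁ + α₂ * Complex.exp (Complex.I * (π / 4)))⁻¹ *
        Complex.exp (Complex.I * (Real.sqrt 2 * Λ)) =
       (α₃ + α₄ * Complex.exp (Complex.I * (π / 4)))⁻¹ *
        Complex.exp (Complex.I * (3 * π / 4)) *
        Complex.exp (Complex.I * (Real.sqrt 2 * Λ))) :=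
  stmt12_general Λ γr γl α₁ α₂ α₃ α₄ h12p h34p fBm fBm' fBp fBp' gBm gBm' gBp gBp' hfBm hfBm' hfBp
    hfBp' hgBm hgBm' hgBp hgBp'
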